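/- Fermionic reflection relation: the extended free boundary state |v,t⟩ satisfies ψ(z)|v,t⟩ = t^{−1} · (v − z)/(v + z) · ψ*(v²/z) |v,t⟩ for v < |z| (as an identity of vector-valued Laurent series). -/

import Mathlib

noncomputable section
open Classical

/-!
Statement 17: the fermionic reflection relation
`ψ(z)|v,t⟩ = t⁻¹ · (v − z)/(v + z) · ψ*(v²/z) |v,t⟩`
as an identity of vector-valued Laurent series in `z` (valid for `v < |z|`).

The half-integer `m + 1/2` is encoded by `m : ℤ`, and the Fock space by coefficient
functions `f : Set ℤ → ℂ` with `f T = ⟨T|f⟩`.  As an identity of Laurent series, the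
relation means exactly that, after clearing the denominator,
`(v + z) ψ(z) |v,t⟩ = t⁻¹ (v − z) ψ*(v²/z) |v,t⟩`,
the coefficients of each power `z^{m+1/2}` on the two sides agree.  Since
`ψ(z) = Σ_m ψ_{m+1/2} z^{m+1/2}` and
`ψ*(v²/z) = Σ_m ψ_{m+1/2}^* (v²/z)^{−m−1/2} = Σ_m ψ_{m+1/2}^* v^{−2m−1} z^{m+1/2}`,
the coefficient of `z^{m+1/2}`, evaluated at a basis covector `⟨T|`, reads
`v·(ψ_{m+1/2}|v,t⟩)(T) + (ψ_{m−1/2}|v,t⟩)(T)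
  = t⁻¹ ( v^{−2m} (ψ_{m+1/2}^*|v,t⟩)(T) − v^{−2m+1} (ψ_{m−1/2}^*|v,t⟩)(T) )`,
which is the statement below.
-/

def posPart (S : Set ℤ) : Set ℤ := S ∩ {m | 0 ≤ m}
def negPart (S : Set ℤ) : Set ℤ := {m | m < 0} \ S
def Admissible (S : Set ℤ) : Prop := (posPart S).Finite ∧ (negPart S).Finite
def charge (S : Set ℤ) : ℤ := ((posPart S).ncard : ℤ) - ((negPart S).ncard : ℤ)
def energy (S : Set ℤ) : ℝ :=
  (∑ᶠ m ∈ posPart S, ((m : ℝ) + 1/2)) - ∑ᶠ m ∈ negPart S, ((m : ℝ) + 1/2)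
def jcount (S : Set ℤ) (k : ℤ) : ℕ := (S ∩ {m | k < m}).ncard

def psiAct (k : ℤ) (f : Set ℤ → ℂ) : Set ℤ → ℂ := fun T =>
  if k ∈ T then (-1 : ℂ) ^ jcount T k * f (T \ {k}) else 0

def psiStarAct (k : ℤ) (f : Set ℤ → ℂ) : Set ℤ → ℂ := fun T =>
  if k ∉ T then (-1 : ℂ) ^ jcount T k * f (insert k T) else 0

/-- The extended free boundary state `|v,t⟩ = Σ_{S : C(S) even} t^{C(S)/2} v^{H(S)}|S⟩`. -/
def fbCoeff (v t : ℝ) (S : Set ℤ) : ℂ :=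
  if Even (charge S) then ((t ^ (charge S / 2) * v ^ energy S : ℝ) : ℂ) else 0

/-!
Since `ψ` and `ψ*` change the charge by one and `|v,t⟩` lives in even charge, all
coefficients vanish when `C(T)` is even. When `C(T) = 2n + 1`, both `⟨T|ψ_{k+1/2}|v,t⟩`
(for `k ∈ T`) and `t⁻¹ v^{−2k−1} ⟨T|ψ*_{k+1/2}|v,t⟩` (for `k ∉ T`) equal one amplitude
`A_k = ± t^n v^{H(T)−k−1/2}`, and `A_{m−1} = ± v A_m` with the minus sign exactly when
`m ∈ T` (the level `m` then counts towards the sign of `ψ_{m−1/2}`). The relation thereby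
becomes a linear identity in `A_m`, checked on the occupation pattern of `m` and `m − 1`.
-/

section Admissible

variable {S : Set ℤ} {k : ℤ}

theorem mem_posPart {x : ℤ} : x ∈ posPart S ↔ x ∈ S ∧ 0 ≤ x := Iff.rfl

theorem mem_negPart {x : ℤ} : x ∈ negPart S ↔ x < 0 ∧ x ∉ S := Iff.rfl

theorem posPart_insert_of_nonneg (hk : 0 ≤ k) : posPart (insert k S) = insert k (posPart S) := by
  ext x
  simp only [mem_posPart, Set.mem_insert_iff]
  constructor
  · rintro ⟨rfl | hx, hx0⟩ <;> tauto
  · rintro (rfl | hx) <;> tauto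

theorem posPart_insert_of_neg (hk : k < 0) : posPart (insert k S) = posPart S := by
  ext x
  simp only [mem_posPart, Set.mem_insert_iff]
  constructor
  · rintro ⟨rfl | hx, hx0⟩
    exacts [absurd hx0 (not_le.2 hk), ⟨hx, hx0⟩]
  · exact fun ⟨hx, hx0⟩ => ⟨Or.inr hx, hx0⟩

theorem negPart_insert_of_nonneg (hk : 0 ≤ k) : negPart (insert k S) = negPart S := by
  ext x
  simp only [mem_negPart, Set.mem_insert_iff, not_or]
  constructor
  · exact fun ⟨hx0, _, hx⟩ => ⟨hx0, hx⟩
  · exact fun ⟨hx0, hx⟩ => ⟨hx0, by omega, hx⟩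

theorem negPart_insert : negPart (insert k S) = negPart S \ {k} := by
  ext x
  simp only [mem_negPart, Set.mem_sdiff, Set.mem_insert_iff, Set.mem_singleton_iff, not_or]
  tauto

theorem Admissible.insert (hS : Admissible S) (k : ℤ) : Admissible (insert k S) := by
  rcases le_or_gt 0 k with hk | hk
  · rw [Admissible, posPart_insert_of_nonneg hk, negPart_insert_of_nonneg hk]
    exact ⟨hS.1.insert k, hS.2⟩
  · rw [Admissible, posPart_insert_of_neg hk, negPart_insert]
    exact ⟨hS.1, hS.2.sdiff⟩

theorem Admissible.diff_singleton (hS : Admissible S) (k : ℤ) : Admissible (S \ {k}) :=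
  ⟨hS.1.subset fun _ ⟨hx, hx0⟩ => ⟨hx.1, hx0⟩,
    (hS.2.insert k).subset fun x ⟨hx0, hx⟩ => by
      by_cases hxk : x = k
      · exact Or.inl hxk
      · exact Or.inr ⟨hx0, fun h => hx ⟨h, hxk⟩⟩⟩

theorem charge_insert (hS : Admissible S) (hk : k ∉ S) :
    charge (insert k S) = charge S + 1 := by
  rcases le_or_gt 0 k with h | h
  · rw [charge, posPart_insert_of_nonneg h, negPart_insert_of_nonneg h,
      Set.ncard_insert_of_notMem (fun hc => hk hc.1) hS.1, charge]
    push_cast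
    ring
  · have hkneg : k ∈ negPart S := ⟨h, hk⟩
    have hpos : 0 < (negPart S).ncard := (Set.ncard_pos hS.2).2 ⟨k, hkneg⟩
    rw [charge, posPart_insert_of_neg h, negPart_insert,
      Set.ncard_sdiff_singleton_of_mem hkneg, charge]
    omega

theorem energy_insert (hS : Admissible S) (hk : k ∉ S) :
    energy (insert k S) = energy S + ((k : ℝ) + 1/2) := by
  rcases le_or_gt 0 k with h | h
  · rw [energy, posPart_insert_of_nonneg h, negPart_insert_of_nonneg h,
      finsum_mem_insert _ (fun hc => hk hc.1) hS.1, energy]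
    ring
  · have hkneg : k ∈ negPart S := ⟨h, hk⟩
    have hsplit := finsum_mem_insert (fun m : ℤ => (m : ℝ) + 1/2)
      (fun hc => hc.2 rfl) (hS.2.sdiff (t := {k}))
    rw [Set.insert_sdiff_singleton, Set.insert_eq_of_mem hkneg] at hsplit
    rw [energy, posPart_insert_of_neg h, negPart_insert, energy, hsplit]
    ring

theorem charge_diff_singleton (hS : Admissible S) (hk : k ∈ S) :
    charge (S \ {k}) = charge S - 1 := by
  have h := charge_insert (hS.diff_singleton k) (k := k) fun hc => hc.2 rfl
  rw [Set.insert_sdiff_singleton, Set.insert_eq_of_mem hk] at h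
  omega

theorem energy_diff_singleton (hS : Admissible S) (hk : k ∈ S) :
    energy (S \ {k}) = energy S - ((k : ℝ) + 1/2) := by
  have h := energy_insert (hS.diff_singleton k) (k := k) fun hc => hc.2 rfl
  rw [Set.insert_sdiff_singleton, Set.insert_eq_of_mem hk] at h
  linarith

theorem Admissible.finite_inter_Ioi (hS : Admissible S) (k : ℤ) : (S ∩ Set.Ioi k).Finite :=
  (hS.1.union (Set.finite_Ioo k 0)).subset fun x ⟨hx, hkx⟩ => by
    rcases le_or_gt 0 x with h | h
    · exact Or.inl ⟨hx, h⟩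
    · exact Or.inr ⟨hkx, h⟩

theorem jcount_sub_one (hS : Admissible S) (m : ℤ) :
    jcount S (m - 1) = jcount S m + if m ∈ S then 1 else 0 := by
  have hsplit : S ∩ Set.Ioi (m - 1) = S ∩ {m} ∪ S ∩ Set.Ioi m := by
    ext x
    simp only [Set.mem_inter_iff, Set.mem_Ioi, Set.mem_union, Set.mem_singleton_iff]
    constructor
    · rintro ⟨hx, hmx⟩
      rcases eq_or_lt_of_le (show m ≤ x by omega) with rfl | h
      exacts [Or.inl ⟨hx, rfl⟩, Or.inr ⟨hx, h⟩]
    · rintro (⟨hx, rfl⟩ | ⟨hx, hmx⟩) <;> exact ⟨hx, by omega⟩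
  have hdisj : Disjoint (S ∩ {m}) (S ∩ Set.Ioi m) :=
    Set.disjoint_left.2 fun x ⟨_, hx⟩ ⟨_, hmx⟩ => (lt_irrefl m) (hx ▸ hmx)
  change (S ∩ Set.Ioi (m - 1)).ncard = (S ∩ Set.Ioi m).ncard + _
  rw [hsplit, Set.ncard_union_eq hdisj ((Set.finite_singleton m).inter_of_right S)
    (hS.finite_inter_Ioi m), add_comm]
  split_ifs with hm
  · rw [Set.inter_eq_self_of_subset_right (Set.singleton_subset_iff.2 hm), Set.ncard_singleton]
  · rw [Set.inter_singleton_eq_empty.2 hm, Set.ncard_empty]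

end Admissible

section FreeBoundaryState

variable {v t : ℝ} {T : Set ℤ}

theorem psiAct_fbCoeff_of_even (hT : Admissible T) (h : Even (charge T)) (k : ℤ) :
    psiAct k (fbCoeff v t) T = 0 := by
  unfold psiAct
  split_ifs with hk
  · rw [fbCoeff, if_neg (by rwa [charge_diff_singleton hT hk, Int.even_sub_one, not_not]),
      mul_zero]
  · rfl

theorem psiStarAct_fbCoeff_of_even (hT : Admissible T) (h : Even (charge T)) (k : ℤ) :
    psiStarAct k (fbCoeff v t) T = 0 := by
  unfold psiStarAct
  split_ifs with hk
  · rfl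
  · rw [fbCoeff, if_neg (by rwa [charge_insert hT hk, Int.even_add_one, not_not]), mul_zero]

/-- `⟨T|ψ_{k+1/2}|v,t⟩` for `k ∈ T` when `C(T) = 2n + 1`. -/
def fbAmp (v t : ℝ) (n : ℤ) (T : Set ℤ) (k : ℤ) : ℂ :=
  (-1 : ℂ) ^ jcount T k * ((t ^ n * v ^ (energy T - ((k : ℝ) + 1/2)) : ℝ) : ℂ)

variable {n : ℤ}

theorem psiAct_fbCoeff_of_odd (hT : Admissible T) (hn : charge T = 2 * n + 1) (k : ℤ) :
    psiAct k (fbCoeff v t) T = if k ∈ T then fbAmp v t n T k else 0 := by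
  unfold psiAct
  split_ifs with hk
  · rw [fbAmp, fbCoeff, charge_diff_singleton hT hk, energy_diff_singleton hT hk, hn,
      if_pos ⟨n, by ring⟩, add_sub_cancel_right, Int.mul_ediv_cancel_left _ two_ne_zero]
  · rfl

theorem psiStarAct_fbCoeff_of_odd (hv : 0 < v) (ht : t ≠ 0) (hT : Admissible T)
    (hn : charge T = 2 * n + 1) (k : ℤ) :
    psiStarAct k (fbCoeff v t) T
      = if k ∈ T then 0 else (t : ℂ) * (v : ℂ) ^ (2 * k + 1) * fbAmp v t n T k := by
  unfold psiStarAct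
  split_ifs with hk
  · rfl
  · have hcharge : (charge T + 1) / 2 = n + 1 := by omega
    have henergy : v ^ (energy T + ((k : ℝ) + 1/2))
        = v ^ (2 * k + 1) * v ^ (energy T - ((k : ℝ) + 1/2)) := by
      rw [← Real.rpow_intCast, ← Real.rpow_add hv]
      push_cast
      ring_nf
    rw [fbAmp, fbCoeff, charge_insert hT hk, energy_insert hT hk, if_pos ⟨n + 1, by omega⟩,
      hcharge, zpow_add_one₀ ht, henergy]
    push_cast
    ring

theorem fbAmp_sub_one (hv : 0 < v) (hT : Admissible T) (m : ℤ) :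
    fbAmp v t n T (m - 1) = (if m ∈ T then -1 else 1) * v * fbAmp v t n T m := by
  have henergy : v ^ (energy T - (((m - 1 : ℤ) : ℝ) + 1/2))
      = v * v ^ (energy T - ((m : ℝ) + 1/2)) := by
    rw [mul_comm, ← Real.rpow_add_one hv.ne']
    push_cast
    ring_nf
  rw [fbAmp, fbAmp, jcount_sub_one hT, henergy, pow_add]
  split_ifs <;> push_cast <;> ring

end FreeBoundaryState

theorem fermionic_reflection_general (v t : ℝ) (hv : 0 < v) (ht : t ≠ 0)
    (T : Set ℤ) (hT : Admissible T) (m : ℤ) :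
    (v : ℂ) * psiAct m (fbCoeff v t) T + psiAct (m - 1) (fbCoeff v t) T
      = (t : ℂ)⁻¹ *
          ((v : ℂ) ^ (-2 * m) * psiStarAct m (fbCoeff v t) T -
            (v : ℂ) ^ (-2 * m + 1) * psiStarAct (m - 1) (fbCoeff v t) T) := by
  obtain ⟨n, hn | hn⟩ := Int.even_or_odd' (charge T)
  · have heven : Even (charge T) := ⟨n, by omega⟩
    simp only [psiAct_fbCoeff_of_even hT heven, psiStarAct_fbCoeff_of_even hT heven]
    ring
  have hvC : (v : ℂ) ≠ 0 := by exact_mod_cast hv.ne'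
  have htC : (t : ℂ) ≠ 0 := by exact_mod_cast ht
  have hv₁ : (v : ℂ) ^ (-2 * m) * (v : ℂ) ^ (2 * m + 1) = v := by
    rw [← zpow_add₀ hvC, show -2 * m + (2 * m + 1) = 1 by ring, zpow_one]
  have hv₂ : (v : ℂ) ^ (-2 * m + 1) * (v : ℂ) ^ (2 * (m - 1) + 1) = 1 := by
    rw [← zpow_add₀ hvC, show -2 * m + 1 + (2 * (m - 1) + 1) = 0 by ring, zpow_zero]
  have hpow₁ (x : ℂ) :
      (v : ℂ) ^ (-2 * m) * (t * (v : ℂ) ^ (2 * m + 1) * x) = t * (v * x) := by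
    linear_combination (t * x) * hv₁
  have hpow₂ (x : ℂ) :
      (v : ℂ) ^ (-2 * m + 1) * (t * (v : ℂ) ^ (2 * (m - 1) + 1) * x) = t * x := by
    linear_combination (t * x) * hv₂
  rw [psiAct_fbCoeff_of_odd hT hn, psiAct_fbCoeff_of_odd hT hn,
    psiStarAct_fbCoeff_of_odd hv ht hT hn, psiStarAct_fbCoeff_of_odd hv ht hT hn,
    fbAmp_sub_one hv hT]
  simp only [mul_ite, mul_zero, hpow₁, hpow₂]
  split_ifs <;> field_simp <;> ring

theorem fermionic_reflection (v t : ℝ) (hv : 0 < v) (hv1 : v < 1) (ht : t ≠ 0)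
    (T : Set ℤ) (hT : Admissible T) (m : ℤ) :
    (v : ℂ) * psiAct m (fbCoeff v t) T + psiAct (m - 1) (fbCoeff v t) T
      = (t : ℂ)⁻¹ *
          ((v : ℂ) ^ (-2 * m) * psiStarAct m (fbCoeff v t) T -
            (v : ℂ) ^ (-2 * m + 1) * psiStarAct (m - 1) (fbCoeff v t) T) :=
  fermionic_reflection_general v t hv ht T hT m

end
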